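/- arXiv:1506.04666 — 3 statements merged into one kernel-verified Lean document; each statement's English description precedes it below -/
import Mathlib

section
/- Let l,d,m,m7>0 with l=√2 d, let r1,...,r6 be the vertices of the regular octahedron r1=(l,0,-d), r2=(-l/2,√3 l/2,-d), r3=(-l/2,-√3 l/2,-d), r4=(-l,0,d), r5=(l/2,-√3 l/2,d), r6=(l/2,√3 l/2,d), r7=(0,0,0), with masses m1=...=m6=m at r1,...,r6 and m7 at r7. Then for every choice of indices 1 ≤ i < j ≤ 7 and h ∉ {i,j}, the Laura–Andoyer–Dziobek function f_{ijh} = Σ_{k∉{i,j,h}} m_k (R_{ik} - R_{jk}) Δ_{ijhk} vanishes, where R_{ik}=dist(r_i,r_k)^{-3} and Δ_{ijhk} = ((r_i-r_j) × (r_j-r_h)) ⬝ (r_h-r_k). -/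
open Real Matrix Finset

/-- Six times the signed volume of the tetrahedron on the points `a b c e`. -/
noncomputable def Δ (a b c e : EuclideanSpace ℝ (Fin 3)) : ℝ :=
  dotProduct (crossProduct (a - b) (b - c)) (c - e)

/-- The Laura–Andoyer–Dziobek function `f_{ijh}` for positions `r` and masses `m`. -/
noncomputable def dziobek (r : Fin 7 → EuclideanSpace ℝ (Fin 3)) (m : Fin 7 → ℝ)
    (i j h : Fin 7) : ℝ :=
  ∑ k ∈ Finset.univ \ {i, j, h},
    m k * ((dist (r i) (r k) ^ 3)⁻¹ - (dist (r j) (r k) ^ 3)⁻¹) * Δ (r i) (r j) (r h) (r k)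

/-- The two-rotated-triangles configuration with central seventh body. -/
noncomputable def config (l d : ℝ) : Fin 7 → EuclideanSpace ℝ (Fin 3) :=
  ![!₂[l, 0, -d], !₂[-l/2, √3*l/2, -d], !₂[-l/2, -(√3*l/2), -d],
    !₂[-l, 0, d], !₂[l/2, -(√3*l/2), d], !₂[l/2, √3*l/2, d], !₂[0, 0, 0]]

/-!
`Δ a b c e = φ (c - e)` for the linear form `φ = ⟨n, ·⟩`, `n = (a - b) × (b - c)`, and `φ` takes the
same value at `a`, `b`, `c`. Hence `f_{ijh} = φ (A_j) - φ (A_i)` for the accelerations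
`A_i = ∑ₖ m_k R_{ik} (r_k - r_i)`, and in a central configuration, `A_i = λ (r_i - c)`, this is
`λ φ (r_j - r_i) = 0`.

The octahedron is `±u₀, ±u₁, ±u₂` with `0` at the centre, for three pairwise orthogonal vectors of
a common length `ρ` (orthogonality is where `l = √2 d` enters). Every vertex sees four vertices at
distance `√2 ρ`, its antipode at `2 ρ` and the centre at `ρ`, and the four neighbours sum to `0`,
so each `A_i` is the same multiple of `r_i`.
-/

/-- The sum includes `k = i`, whose term is `0` because `r i - r i = 0` (and `0⁻¹ = 0`). -/
def IsCentralConfiguration {ι E : Type*} [Fintype ι] [NormedAddCommGroup E] [NormedSpace ℝ E]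
    (r : ι → E) (m : ι → ℝ) : Prop :=
  ∃ (lam : ℝ) (c : E), ∀ i, ∑ k, (m k * (dist (r i) (r k) ^ 3)⁻¹) • (r k - r i) = lam • (r i - c)

noncomputable def planeNormal (a b c : EuclideanSpace ℝ (Fin 3)) : Fin 3 → ℝ :=
  crossProduct (a - b).ofLp (b.ofLp - c.ofLp)

section PlaneNormal

variable (a b c : EuclideanSpace ℝ (Fin 3))

lemma planeNormal_dotProduct_left : planeNormal a b c ⬝ᵥ a.ofLp = planeNormal a b c ⬝ᵥ c.ofLp := by
  have h₁ := dot_self_cross (a - b).ofLp (b.ofLp - c.ofLp)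
  have h₂ := dot_cross_self (a - b).ofLp (b.ofLp - c.ofLp)
  rw [dotProduct_comm] at h₁ h₂
  simp only [planeNormal, WithLp.ofLp_sub, dotProduct_sub] at h₁ h₂ ⊢
  linarith

lemma planeNormal_dotProduct_middle :
    planeNormal a b c ⬝ᵥ b.ofLp = planeNormal a b c ⬝ᵥ c.ofLp := by
  have h₂ := dot_cross_self (a - b).ofLp (b.ofLp - c.ofLp)
  rw [dotProduct_comm, dotProduct_sub] at h₂
  rw [planeNormal]
  linarith

lemma Δ_eq_sub (e : EuclideanSpace ℝ (Fin 3)) :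
    Δ a b c e = planeNormal a b c ⬝ᵥ c.ofLp - planeNormal a b c ⬝ᵥ e.ofLp :=
  dotProduct_sub _ _ _

end PlaneNormal

theorem dziobek_eq_zero_of_isCentralConfiguration {r : Fin 7 → EuclideanSpace ℝ (Fin 3)}
    {m : Fin 7 → ℝ} (hr : IsCentralConfiguration r m) (i j h : Fin 7) :
    dziobek r m i j h = 0 := by
  obtain ⟨lam, c, hc⟩ := hr
  set φ : EuclideanSpace ℝ (Fin 3) → ℝ :=
    fun v => planeNormal (r i) (r j) (r h) ⬝ᵥ v.ofLp with hφ
  have hφi : φ (r i) = φ (r h) := planeNormal_dotProduct_left _ _ _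
  have hφj : φ (r j) = φ (r h) := planeNormal_dotProduct_middle _ _ _
  have hΔ : ∀ k, Δ (r i) (r j) (r h) (r k) = φ (r h) - φ (r k) := fun k => Δ_eq_sub _ _ _ _
  have hφ_sum : ∀ x (w : Fin 7 → ℝ), φ (∑ k, w k • (r k - x)) = ∑ k, w k * (φ (r k) - φ x) := by
    intro x w
    simp [hφ, WithLp.ofLp_sum, dotProduct_sum, dotProduct_smul, dotProduct_sub]
  have hφ_smul : ∀ x, φ (lam • (x - c)) = lam * (φ x - φ c) := by
    intro x
    simp [hφ, dotProduct_smul, dotProduct_sub]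
  have hAi := congrArg φ (hc i)
  have hAj := congrArg φ (hc j)
  rw [hφ_sum, hφ_smul] at hAi hAj
  unfold dziobek
  rw [Finset.sum_subset (Finset.subset_univ _) ?_]
  · rw [hφi] at hAi
    rw [hφj] at hAj
    calc _ = ∑ k, ((m k * (dist (r j) (r k) ^ 3)⁻¹) * (φ (r k) - φ (r h))
          - (m k * (dist (r i) (r k) ^ 3)⁻¹) * (φ (r k) - φ (r h))) :=
          Finset.sum_congr rfl fun k _ => by rw [hΔ]; ring
      _ = 0 := by rw [Finset.sum_sub_distrib, hAi, hAj, sub_self]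
  · intro k _ hk
    obtain rfl | rfl | rfl : k = i ∨ k = j ∨ k = h := by
      simpa [or_iff_not_imp_left] using hk
    all_goals simp [hΔ, hφi, hφj]

section Octahedron

open scoped RealInnerProductSpace

variable {E : Type*} [NormedAddCommGroup E] [InnerProductSpace ℝ E]

def octahedron (u : Fin 3 → E) : Fin 7 → E := ![u 0, u 1, u 2, -u 0, -u 1, -u 2, 0]

lemma dist_eq_sqrt_two_mul_of_inner_eq_zero {x y : E} {ρ : ℝ} (hxy : ⟪x, y⟫ = 0)
    (hx : ‖x‖ = ρ) (hy : ‖y‖ = ρ) : dist x y = √2 * ρ := by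
  have hρ : 0 ≤ ρ := hx ▸ norm_nonneg x
  rw [dist_eq_norm, norm_sub_eq_sqrt_iff_real_inner_eq_zero.2 hxy, hx, hy,
    show ρ * ρ + ρ * ρ = 2 * ρ ^ 2 by ring, Real.sqrt_mul zero_le_two, Real.sqrt_sq hρ]

lemma dist_neg_self (x : E) : dist (-x) x = 2 * ‖x‖ := by
  rw [dist_eq_norm, ← neg_add', norm_neg, ← two_smul ℝ, norm_smul, Real.norm_two]

lemma dist_self_neg (x : E) : dist x (-x) = 2 * ‖x‖ := by
  rw [dist_comm, dist_neg_self]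

theorem isCentralConfiguration_octahedron {u : Fin 3 → E} {ρ : ℝ}
    (horth : Pairwise fun a b => ⟪u a, u b⟫ = 0) (hnorm : ∀ a, ‖u a‖ = ρ) (m m7 : ℝ) :
    IsCentralConfiguration (octahedron u) ![m, m, m, m, m, m, m7] := by
  refine ⟨-(4 * m * ((√2 * ρ) ^ 3)⁻¹ + 2 * m * ((2 * ρ) ^ 3)⁻¹ + m7 * (ρ ^ 3)⁻¹), 0, fun i => ?_⟩
  fin_cases i <;>
  simp only [octahedron, Fin.sum_univ_seven, Fin.isValue, Fin.reduceFinMk, Matrix.cons_val,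
    cons_val_zero, cons_val_one, dist_self, dist_self_neg, dist_neg_self, dist_zero_right,
    dist_zero_left, dist_eq_sqrt_two_mul_of_inner_eq_zero, ne_eq, Fin.reduceEq, not_false_eq_true,
    horth _, hnorm, inner_neg_left, inner_neg_right, neg_zero, norm_neg]
  all_goals module

end Octahedron

noncomputable def configAxes (l d : ℝ) : Fin 3 → EuclideanSpace ℝ (Fin 3) :=
  ![!₂[l, 0, -d], !₂[-l/2, √3*l/2, -d], !₂[-l/2, -(√3*l/2), -d]]

lemma config_eq_octahedron (l d : ℝ) : config l d = octahedron (configAxes l d) := by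
  funext k
  fin_cases k <;> ext a <;> fin_cases a <;>
    simp only [config, octahedron, configAxes, Fin.isValue, Fin.zero_eta, Fin.mk_one,
      Fin.reduceFinMk, Matrix.cons_val, cons_val_zero, cons_val_one, PiLp.neg_apply,
      PiLp.zero_apply] <;>
    ring

open scoped RealInnerProductSpace in
lemma configAxes_pairwise_orthogonal {l d : ℝ} (hld : l = √2 * d) :
    Pairwise fun a b => ⟪configAxes l d a, configAxes l d b⟫ = 0 := by
  have hl : l ^ 2 = 2 * d ^ 2 := by rw [hld, mul_pow, Real.sq_sqrt zero_le_two]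
  have h3 : √3 ^ 2 = 3 := Real.sq_sqrt zero_le_three
  intro a b hab
  fin_cases a <;> fin_cases b <;>
    simp only [configAxes, EuclideanSpace.inner_eq_star_dotProduct, dotProduct, Pi.star_apply,
      star_trivial, Fin.sum_univ_three, Fin.isValue, Fin.zero_eta, Fin.mk_one, Fin.reduceFinMk,
      Matrix.cons_val, cons_val_zero, cons_val_one, ne_eq, not_true_eq_false] at hab ⊢ <;>
    nlinarith [hl, h3]

lemma norm_configAxes (l d : ℝ) (a : Fin 3) : ‖configAxes l d a‖ = √(l ^ 2 + d ^ 2) := by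
  have h3 : √3 ^ 2 = 3 := Real.sq_sqrt zero_le_three
  rw [EuclideanSpace.norm_eq]
  congr 1
  fin_cases a <;>
    simp only [configAxes, Fin.sum_univ_three, Real.norm_eq_abs, sq_abs, Fin.isValue, Fin.zero_eta,
      Fin.mk_one, Fin.reduceFinMk, Matrix.cons_val, cons_val_zero, cons_val_one] <;>
    nlinarith [h3]

theorem octahedron_is_central_general (l d m m7 : ℝ) (hld : l = √2 * d)
    (mass : Fin 7 → ℝ) (hmass : mass = ![m, m, m, m, m, m, m7]) :
    ∀ i j h : Fin 7, i < j → h ≠ i → h ≠ j →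
      dziobek (config l d) mass i j h = 0 := by
  intro i j h _ _ _
  subst hmass
  rw [config_eq_octahedron]
  exact dziobek_eq_zero_of_isCentralConfiguration
    (isCentralConfiguration_octahedron (configAxes_pairwise_orthogonal hld)
      (norm_configAxes l d) m m7) i j h

theorem octahedron_is_central (l d m m7 : ℝ) (hl : 0 < l) (hd : 0 < d)
    (hm : 0 < m) (hm7 : 0 < m7) (hld : l = √2 * d)
    (mass : Fin 7 → ℝ) (hmass : mass = ![m, m, m, m, m, m, m7]) :
    ∀ i j h : Fin 7, i < j → h ≠ i → h ≠ j →
      dziobek (config l d) mass i j h = 0 :=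
  octahedron_is_central_general l d m m7 hld mass hmass
end

section
/- Let l,d,m,m7>0 and consider the configuration r1=(l,0,-d), r2=(-l/2,√3 l/2,-d), r3=(-l/2,-√3 l/2,-d), r4=(-l,0,d), r5=(l/2,-√3 l/2,d), r6=(l/2,√3 l/2,d), r7=(0,0,0) with masses m at r1,...,r6 and m7 at r7. If the Laura–Andoyer–Dziobek equation f_{167} = Σ_{k∈{2,3,4,5}} m (R_{1k} - R_{6k}) Δ_{167k} = 0 holds, where R_{ik}=dist(r_i,r_k)^{-3} and Δ_{ijhk} = ((r_i-r_j) × (r_j-r_h)) ⬝ (r_h-r_k), then l = √2·d. -/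
open Real Matrix Finset

/-!
The configuration is centrally symmetric about the seventh body, `r₄ = -r₁`, `r₅ = -r₂`,
`r₃ = -r₆`, and with the origin as third point `Δ` is linear in the fourth point and vanishes
when the fourth point is the antipode of one of the first two. Hence in `f₁₆₇` the terms
`k = 3, 4` vanish and the term `k = 5` is minus the `k = 2` term with the roles of the two
distances swapped, leaving `f₁₆₇ = 2 m (R₁₂ - R₆₂) Δ₁₆₇₂` with `Δ₁₆₇₂ ≠ 0`. So
`|r₁ - r₂| = |r₆ - r₂|`, i.e. `3 l² = l² + 4 d²`. (In Lean, `rᵢ` is `config l d (i - 1)`.)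
-/

lemma dotProduct_cross_eq {R : Type*} [CommRing R] (u v w : Fin 3 → R) :
    u ⬝ᵥ v ⨯₃ w = u 0 * (v 1 * w 2 - v 2 * w 1) + u 1 * (v 2 * w 0 - v 0 * w 2)
      + u 2 * (v 0 * w 1 - v 1 * w 0) := by
  rw [cross_apply, dotProduct, Fin.sum_univ_three]
  rfl

section Origin

variable (a b e : EuclideanSpace ℝ (Fin 3))

lemma Δ_origin : Δ a b 0 e = -(e.ofLp ⬝ᵥ a.ofLp ⨯₃ b.ofLp) := by
  rw [Δ, WithLp.ofLp_sub, WithLp.ofLp_zero, sub_zero, zero_sub, map_sub, LinearMap.sub_apply,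
    cross_self, sub_zero, dotProduct_neg, dotProduct_comm]

lemma Δ_origin_neg : Δ a b 0 (-e) = -Δ a b 0 e := by
  simp only [Δ_origin, WithLp.ofLp_neg, neg_dotProduct]

lemma Δ_origin_neg_left : Δ a b 0 (-a) = 0 := by
  rw [Δ_origin_neg, Δ_origin, dot_self_cross, neg_zero, neg_zero]

lemma Δ_origin_neg_right : Δ a b 0 (-b) = 0 := by
  rw [Δ_origin_neg, Δ_origin, dot_cross_self, neg_zero, neg_zero]

end Origin

lemma EuclideanSpace.dist_sq_fin_three (x y : EuclideanSpace ℝ (Fin 3)) :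
    dist x y ^ 2 = (x 0 - y 0) ^ 2 + (x 1 - y 1) ^ 2 + (x 2 - y 2) ^ 2 := by
  simp [EuclideanSpace.dist_sq_eq, Fin.sum_univ_three, Real.dist_eq, sq_abs]

section Config

variable (l d : ℝ)

lemma config_two : config l d 2 = -config l d 5 := by
  ext i; fin_cases i <;> simp [config, neg_div]

lemma config_three : config l d 3 = -config l d 0 := by
  ext i; fin_cases i <;> simp [config]

lemma config_four : config l d 4 = -config l d 1 := by
  ext i; fin_cases i <;> simp [config, neg_div]

lemma config_six : config l d 6 = 0 := by
  ext i; fin_cases i <;> simp [config]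

lemma dist_config_zero_one_sq : dist (config l d 0) (config l d 1) ^ 2 = 3 * l ^ 2 := by
  rw [EuclideanSpace.dist_sq_fin_three]
  change (l - -l / 2) ^ 2 + (0 - √3 * l / 2) ^ 2 + (-d - -d) ^ 2 = _
  linear_combination (l ^ 2 / 4) * Real.sq_sqrt (zero_le_three (α := ℝ))

lemma dist_config_five_four_sq : dist (config l d 5) (config l d 4) ^ 2 = 3 * l ^ 2 := by
  rw [EuclideanSpace.dist_sq_fin_three]
  change (l / 2 - l / 2) ^ 2 + (√3 * l / 2 - -(√3 * l / 2)) ^ 2 + (d - d) ^ 2 = _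
  linear_combination l ^ 2 * Real.sq_sqrt (zero_le_three (α := ℝ))

lemma dist_config_five_one_sq : dist (config l d 5) (config l d 1) ^ 2 = l ^ 2 + 4 * d ^ 2 := by
  rw [EuclideanSpace.dist_sq_fin_three]
  change (l / 2 - -l / 2) ^ 2 + (√3 * l / 2 - √3 * l / 2) ^ 2 + (d - -d) ^ 2 = _
  ring

lemma dist_config_zero_four_sq : dist (config l d 0) (config l d 4) ^ 2 = l ^ 2 + 4 * d ^ 2 := by
  rw [EuclideanSpace.dist_sq_fin_three]
  change (l - l / 2) ^ 2 + (0 - -(√3 * l / 2)) ^ 2 + (-d - d) ^ 2 = _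
  linear_combination (l ^ 2 / 4) * Real.sq_sqrt (zero_le_three (α := ℝ))

lemma Δ_config_zero_five_six_one :
    Δ (config l d 0) (config l d 5) (config l d 6) (config l d 1) = 3 * √3 * l ^ 2 * d / 2 := by
  rw [config_six, Δ_origin, dotProduct_cross_eq]
  change -(-l / 2 * (0 * d - -d * (√3 * l / 2)) + √3 * l / 2 * (-d * (l / 2) - l * d)
    + -d * (l * (√3 * l / 2) - 0 * (l / 2))) = _
  ring

lemma dziobek_config_zero_five_six (m m7 : ℝ) :
    dziobek (config l d) ![m, m, m, m, m, m, m7] 0 5 6 =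
      2 * m * ((dist (config l d 0) (config l d 1) ^ 3)⁻¹ -
        (dist (config l d 5) (config l d 1) ^ 3)⁻¹) *
          Δ (config l d 0) (config l d 5) (config l d 6) (config l d 1) := by
  have hdist₁ : dist (config l d 5) (config l d 4) = dist (config l d 0) (config l d 1) :=
    (sq_eq_sq₀ dist_nonneg dist_nonneg).1 <| by
      rw [dist_config_five_four_sq, dist_config_zero_one_sq]
  have hdist₂ : dist (config l d 0) (config l d 4) = dist (config l d 5) (config l d 1) :=
    (sq_eq_sq₀ dist_nonneg dist_nonneg).1 <| by
      rw [dist_config_zero_four_sq, dist_config_five_one_sq]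
  have hΔ₄ : Δ (config l d 0) (config l d 5) (config l d 6) (config l d 4) =
      -Δ (config l d 0) (config l d 5) (config l d 6) (config l d 1) := by
    rw [config_four, config_six, Δ_origin_neg]
  have hΔ₂ : Δ (config l d 0) (config l d 5) (config l d 6) (config l d 2) = 0 := by
    rw [config_two, config_six, Δ_origin_neg_right]
  have hΔ₃ : Δ (config l d 0) (config l d 5) (config l d 6) (config l d 3) = 0 := by
    rw [config_three, config_six, Δ_origin_neg_left]
  rw [dziobek, show univ \ ({0, 5, 6} : Finset (Fin 7)) = {1, 2, 3, 4} by decide]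
  simp only [sum_insert (show (1 : Fin 7) ∉ {2, 3, 4} by decide),
    sum_insert (show (2 : Fin 7) ∉ {3, 4} by decide),
    sum_insert (show (3 : Fin 7) ∉ {4} by decide), sum_singleton]
  rw [hΔ₂, hΔ₃, hΔ₄, hdist₁, hdist₂]
  simp only [Matrix.cons_val, mul_zero]
  ring

end Config

theorem f167_forces_octahedron_general (l d m m7 : ℝ) (hl : 0 < l) (hd : 0 < d)
    (hm : 0 < m)
    (mass : Fin 7 → ℝ) (hmass : mass = ![m, m, m, m, m, m, m7])
    (hf : dziobek (config l d) mass 0 5 6 = 0) :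
    l = √2 * d := by
  subst hmass
  rw [dziobek_config_zero_five_six, Δ_config_zero_five_six_one] at hf
  have hR : (dist (config l d 0) (config l d 1) ^ 3)⁻¹ =
      (dist (config l d 5) (config l d 1) ^ 3)⁻¹ :=
    sub_eq_zero.1 <| by simpa [hm.ne', hl.ne', hd.ne'] using hf
  have hdist : dist (config l d 0) (config l d 1) = dist (config l d 5) (config l d 1) :=
    (pow_left_inj₀ dist_nonneg dist_nonneg three_ne_zero).1 (inv_injective hR)
  have hl2 : l ^ 2 = 2 * d ^ 2 := by
    have := dist_config_zero_one_sq l d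
    rw [hdist, dist_config_five_one_sq] at this
    linarith
  refine (sq_eq_sq₀ hl.le (by positivity)).1 ?_
  rw [mul_pow, Real.sq_sqrt zero_le_two, hl2]

theorem f167_forces_octahedron (l d m m7 : ℝ) (hl : 0 < l) (hd : 0 < d)
    (hm : 0 < m) (hm7 : 0 < m7)
    (mass : Fin 7 → ℝ) (hmass : mass = ![m, m, m, m, m, m, m7])
    (hf : dziobek (config l d) mass 0 5 6 = 0) :
    l = √2 * d :=
  f167_forces_octahedron_general l d m m7 hl hd hm mass hmass hf
end

section
/- Let l,d>0 and masses m1,...,m7>0, with the configuration r1=(l,0,-d), r2=(-l/2,√3 l/2,-d), r3=(-l/2,-√3 l/2,-d), r4=(-l,0,d), r5=(l/2,-√3 l/2,d), r6=(l/2,√3 l/2,d), r7=(0,0,0). If the Dziobek equation f_{123} = Σ_{k∈{4,5,6,7}} m_k (R_{1k} - R_{2k}) Δ_{123k} = 0 holds, where R_{ik}=dist(r_i,r_k)^{-3} and Δ_{ijhk} = ((r_i-r_j) × (r_j-r_h)) ⬝ (r_h-r_k), then m4 = m5. -/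
open Real Matrix Finset

/-!
The reflection in the vertical plane through `r₃` and `r₇` swaps `r₁ ↔ r₂` and `r₄ ↔ r₅` and
fixes `r₆`, `r₇`. Hence in `f₁₂₃` the terms `k = 6, 7` vanish and the terms `k = 4, 5` combine to
`(m₄ - m₅) (R₁₄ - R₂₄) Δ₁₂₃₄`. Finally `|r₂ - r₄| < |r₁ - r₄|` and `Δ₁₂₃₄ = -3√3 l² d ≠ 0`.
In Lean the bodies are indexed from `0`, so body `i` of the paper is `config l d (i - 1)`.
-/

theorem EuclideanSpace.dist_eq_sqrt_fin_three (a b : EuclideanSpace ℝ (Fin 3)) :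
    dist a b = √((a 0 - b 0) ^ 2 + (a 1 - b 1) ^ 2 + (a 2 - b 2) ^ 2) := by
  simp [EuclideanSpace.dist_eq, Fin.sum_univ_three, Real.dist_eq, sq_abs]

theorem dziobek_zero_one_two_eq_of_symm (r : Fin 7 → EuclideanSpace ℝ (Fin 3))
    (m : Fin 7 → ℝ)
    (h3 : dist (r 0) (r 3) = dist (r 1) (r 4)) (h4 : dist (r 0) (r 4) = dist (r 1) (r 3))
    (h5 : dist (r 0) (r 5) = dist (r 1) (r 5)) (h6 : dist (r 0) (r 6) = dist (r 1) (r 6))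
    (hΔ : Δ (r 0) (r 1) (r 2) (r 4) = Δ (r 0) (r 1) (r 2) (r 3)) :
    dziobek r m 0 1 2 =
      (m 3 - m 4) * ((dist (r 0) (r 3) ^ 3)⁻¹ - (dist (r 1) (r 3) ^ 3)⁻¹) *
        Δ (r 0) (r 1) (r 2) (r 3) := by
  have hrest : (univ \ {0, 1, 2} : Finset (Fin 7)) = {3, 4, 5, 6} := by decide
  rw [dziobek, hrest, sum_insert (by decide), sum_insert (by decide), sum_insert (by decide),
    sum_singleton, h4, h5, h6, hΔ, h3]
  ring

namespace config

variable (l d : ℝ)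

theorem dist_zero_three :
    dist (config l d 0) (config l d 3) = dist (config l d 1) (config l d 4) := by
  simp only [EuclideanSpace.dist_eq_sqrt_fin_three]
  congr 1
  simp [config, mul_pow]
  ring

theorem dist_zero_four :
    dist (config l d 0) (config l d 4) = dist (config l d 1) (config l d 3) := by
  simp only [EuclideanSpace.dist_eq_sqrt_fin_three]
  congr 1
  simp [config, mul_pow, div_pow]
  ring

theorem dist_zero_five :
    dist (config l d 0) (config l d 5) = dist (config l d 1) (config l d 5) := by
  simp only [EuclideanSpace.dist_eq_sqrt_fin_three]
  congr 1
  simp [config, mul_pow, div_pow]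
  ring

theorem dist_zero_six :
    dist (config l d 0) (config l d 6) = dist (config l d 1) (config l d 6) := by
  simp only [EuclideanSpace.dist_eq_sqrt_fin_three]
  congr 1
  simp [config, mul_pow, div_pow]
  ring

theorem dist_one_three_lt (hl : l ≠ 0) :
    dist (config l d 1) (config l d 3) < dist (config l d 0) (config l d 3) := by
  simp only [EuclideanSpace.dist_eq_sqrt_fin_three]
  refine Real.sqrt_lt_sqrt (by positivity) ?_
  simp [config, mul_pow, div_pow]
  nlinarith [sq_pos_of_ne_zero hl]

theorem Δ_three :
    Δ (config l d 0) (config l d 1) (config l d 2) (config l d 3) = -(3 * √3 * l ^ 2 * d) := by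
  simp [Δ, cross_apply, dotProduct, Fin.sum_univ_three, config]
  ring

theorem Δ_four : Δ (config l d 0) (config l d 1) (config l d 2) (config l d 4) =
    Δ (config l d 0) (config l d 1) (config l d 2) (config l d 3) := by
  rw [Δ_three]
  simp [Δ, cross_apply, dotProduct, Fin.sum_univ_three, config]
  ring

end config

theorem f123_forces_m4_eq_m5_general (l d : ℝ) (hl : 0 < l) (hd : 0 < d)
    (mass : Fin 7 → ℝ)
    (hf : dziobek (config l d) mass 0 1 2 = 0) :
    mass 3 = mass 4 := by
  rw [dziobek_zero_one_two_eq_of_symm _ _ (config.dist_zero_three l d) (config.dist_zero_four l d)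
    (config.dist_zero_five l d) (config.dist_zero_six l d) (config.Δ_four l d)] at hf
  have hR :
      (dist (config l d 0) (config l d 3) ^ 3)⁻¹ - (dist (config l d 1) (config l d 3) ^ 3)⁻¹ ≠ 0 :=
    sub_ne_zero.2 <| inv_injective.ne <|
      (pow_lt_pow_left₀ (config.dist_one_three_lt l d hl.ne') dist_nonneg three_ne_zero).ne'
  have hΔ : Δ (config l d 0) (config l d 1) (config l d 2) (config l d 3) ≠ 0 := by
    rw [config.Δ_three]
    exact neg_ne_zero.2 (by positivity)
  simpa [hR, hΔ, sub_eq_zero] using hf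

theorem f123_forces_m4_eq_m5 (l d : ℝ) (hl : 0 < l) (hd : 0 < d)
    (mass : Fin 7 → ℝ) (hmass : ∀ i, 0 < mass i)
    (hf : dziobek (config l d) mass 0 1 2 = 0) :
    mass 3 = mass 4 :=
  f123_forces_m4_eq_m5_general l d hl hd mass hf
end
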